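/- Let G and H be nontrivial connected finite graphs and ℓ ≥ 2. If S is an {ℓ}-resolving set of G and S' is an ℓ-solid-resolving set of H, then S × S' is an {ℓ}-resolving set of G □ H. -/

import Mathlib

/-!
For connected factors, distances in `G □ H` add up. Given distinct small sets `X` and `Y`, look
for `s ∈ S` and a pivot `(a, b) ∈ X \ Y` such that `s` is strictly closer to `a` than to every
other first coordinate of a point of `Y`. Applied to `b` and the second coordinates of `Y`, the
solid-resolving set `S'` gives `s' ∈ S'` strictly closer to `b` than to every other one; since
`(a, b) ∉ Y`, one of the two inequalities is strict for each point of `Y`, so `(s, s')` is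
strictly nearer to `X` than to `Y`. A pivot exists after possibly swapping `X` and `Y`: if the
projections of `X` and `Y` to `G` differ, `S` distinguishes them and a nearest point of the nearer
projection is one; if they agree, any point of `X ∆ Y` is one, with `S` separating its first
coordinate from the rest of the common projection.
-/

open SimpleGraph

variable {V : Type*}

/-- Distance from a vertex to a set of vertices. -/
noncomputable def dSet (G : SimpleGraph V) (s : V) (X : Set V) : ℕ :=
  sInf ((G.dist s) '' X)

/-- `S` is an `ℓ`-solid-resolving set of `G`. -/
def LSolid (G : SimpleGraph V) (S : Set V) (ℓ : ℕ) : Prop :=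
  ∀ X Y : Set V, X.Nonempty → Y.Nonempty → X.ncard ≤ ℓ → X ≠ Y →
    ∃ s ∈ S, dSet G s X ≠ dSet G s Y

/-- `S` is an `{ℓ}`-resolving set of `G`. -/
def LResolving (G : SimpleGraph V) (S : Set V) (ℓ : ℕ) : Prop :=
  ∀ X Y : Set V, X.Nonempty → Y.Nonempty → X.ncard ≤ ℓ → Y.ncard ≤ ℓ → X ≠ Y →
    ∃ s ∈ S, dSet G s X ≠ dSet G s Y

/-- The `ℓ`-solid-metric dimension of `G`. -/
noncomputable def solidDim (G : SimpleGraph V) (ℓ : ℕ) : ℕ :=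
  sInf {k | ∃ S : Set V, LSolid G S ℓ ∧ S.ncard = k}

/-- The `{ℓ}`-metric dimension of `G`. -/
noncomputable def lDim (G : SimpleGraph V) (ℓ : ℕ) : ℕ :=
  sInf {k | ∃ S : Set V, LResolving G S ℓ ∧ S.ncard = k}

section dSet

variable {G : SimpleGraph V} {s : V} {X Y : Set V}

lemma dSet_le_dist {x : V} (hx : x ∈ X) : dSet G s X ≤ G.dist s x :=
  Nat.sInf_le ⟨x, hx, rfl⟩

lemma exists_dSet_eq_dist (hX : X.Nonempty) : ∃ x ∈ X, dSet G s X = G.dist s x := by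
  obtain ⟨x, hx, h⟩ := Nat.sInf_mem (hX.image (G.dist s))
  exact ⟨x, hx, h.symm⟩

lemma dSet_lt_dSet_of_forall_dist_lt {x : V} (hx : x ∈ X) (hY : Y.Nonempty)
    (h : ∀ y ∈ Y, G.dist s x < G.dist s y) : dSet G s X < dSet G s Y := by
  obtain ⟨y, hy, hdy⟩ := exists_dSet_eq_dist (G := G) (s := s) hY
  calc dSet G s X ≤ G.dist s x := dSet_le_dist hx
    _ < G.dist s y := h y hy
    _ = dSet G s Y := hdy.symm

lemma exists_forall_dist_lt_of_dSet_lt (hX : X.Nonempty) (h : dSet G s X < dSet G s Y) :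
    ∃ x ∈ X, ∀ y ∈ Y, G.dist s x < G.dist s y := by
  obtain ⟨x, hx, hdx⟩ := exists_dSet_eq_dist (G := G) (s := s) hX
  exact ⟨x, hx, fun y hy => hdx ▸ h.trans_le (dSet_le_dist hy)⟩

lemma dist_lt_of_dSet_insert_ne {x : V} (h : dSet G s (insert x X) ≠ dSet G s X) :
    ∀ u ∈ X, G.dist s x < G.dist s u := by
  by_contra! ⟨u, hu, hux⟩
  refine h ?_
  have hmin : dSet G s X ≤ G.dist s x := (dSet_le_dist hu).trans hux
  rw [dSet, Set.image_insert_eq,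
    csInf_insert (OrderBot.bddBelow _) (Set.Nonempty.image _ ⟨u, hu⟩)]
  exact min_eq_right hmin

end dSet

section Separation

variable {G : SimpleGraph V} {S : Set V} {ℓ : ℕ}

lemma LResolving.nonempty [Nontrivial V] (hS : LResolving G S ℓ) (hℓ : 1 ≤ ℓ) :
    S.Nonempty := by
  obtain ⟨v₁, v₂, hv⟩ := exists_pair_ne V
  obtain ⟨s, hs, -⟩ := hS {v₁} {v₂} (Set.singleton_nonempty _) (Set.singleton_nonempty _)
    (by simpa using hℓ) (by simpa using hℓ) (by simpa using hv)
  exact ⟨s, hs⟩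

lemma LSolid.nonempty [Nontrivial V] (hS : LSolid G S ℓ) (hℓ : 1 ≤ ℓ) : S.Nonempty := by
  obtain ⟨v₁, v₂, hv⟩ := exists_pair_ne V
  obtain ⟨s, hs, -⟩ := hS {v₁} {v₂} (Set.singleton_nonempty _) (Set.singleton_nonempty _)
    (by simpa using hℓ) (by simpa using hv)
  exact ⟨s, hs⟩

lemma LResolving.exists_forall_dist_lt (hS : LResolving G S ℓ) (hSne : S.Nonempty)
    {A : Set V} (hA : A.ncard ≤ ℓ) {a : V} (ha : a ∈ A) :
    ∃ s ∈ S, ∀ u ∈ A, u ≠ a → G.dist s a < G.dist s u := by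
  rcases (A \ {a}).eq_empty_or_nonempty with hempty | hD
  · obtain ⟨s, hs⟩ := hSne
    exact ⟨s, hs, fun u hu hua => (Set.eq_empty_iff_forall_notMem.1 hempty u ⟨hu, hua⟩).elim⟩
  obtain ⟨s, hs, hne⟩ := hS (A \ {a}) (insert a (A \ {a})) hD (Set.insert_nonempty _ _)
    ((Set.ncard_sdiff_singleton_le A a).trans hA) ((Set.insert_sdiff_self_of_mem ha).symm ▸ hA)
    (fun h => (h ▸ Set.mem_insert a _ : a ∈ A \ {a}).2 rfl)
  exact ⟨s, hs, fun u hu hua => dist_lt_of_dSet_insert_ne hne.symm u ⟨hu, hua⟩⟩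

lemma LSolid.exists_forall_dist_lt (hS : LSolid G S ℓ) (hSne : S.Nonempty)
    {B : Set V} (hB : B.ncard ≤ ℓ) (b : V) :
    ∃ s ∈ S, ∀ w ∈ B, w ≠ b → G.dist s b < G.dist s w := by
  rcases (B \ {b}).eq_empty_or_nonempty with hempty | hD
  · obtain ⟨s, hs⟩ := hSne
    exact ⟨s, hs, fun w hw hwb => (Set.eq_empty_iff_forall_notMem.1 hempty w ⟨hw, hwb⟩).elim⟩
  obtain ⟨s, hs, hne⟩ := hS (B \ {b}) (insert b (B \ {b})) hD (Set.insert_nonempty _ _)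
    ((Set.ncard_sdiff_singleton_le B b).trans hB)
    (fun h => (h ▸ Set.mem_insert b _ : b ∈ B \ {b}).2 rfl)
  exact ⟨s, hs, fun w hw hwb => dist_lt_of_dSet_insert_ne hne.symm w ⟨hw, hwb⟩⟩

end Separation

section ProductSeparation

variable {W : Type*}

namespace SimpleGraph

lemma dist_boxProd {G : SimpleGraph V} {H : SimpleGraph W} (hG : G.Connected)
    (hH : H.Connected) (x y : V × W) :
    (G □ H).dist x y = G.dist x.1 y.1 + H.dist x.2 y.2 := by
  apply Nat.cast_injective (R := ℕ∞)
  push_cast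
  rw [((hG.boxProd hH) x y).coe_dist_eq_edist, (hG x.1 y.1).coe_dist_eq_edist,
    (hH x.2 y.2).coe_dist_eq_edist, edist_boxProd]

end SimpleGraph

lemma LSolid.exists_forall_add_dist_lt {G : SimpleGraph V} {H : SimpleGraph W} {S' : Set W}
    {ℓ : ℕ} (hS' : LSolid H S' ℓ) (hS'ne : S'.Nonempty) {Y : Set (V × W)} (hYfin : Y.Finite)
    (hY : Y.ncard ≤ ℓ) {a : V} {b : W} (hab : (a, b) ∉ Y) {s : V}
    (hs : ∀ q ∈ Y, q.1 ≠ a → G.dist s a < G.dist s q.1) :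
    ∃ s' ∈ S', ∀ q ∈ Y, G.dist s a + H.dist s' b < G.dist s q.1 + H.dist s' q.2 := by
  obtain ⟨s', hs', hsep⟩ :=
    hS'.exists_forall_dist_lt hS'ne ((Set.ncard_image_le hYfin).trans hY) b
  refine ⟨s', hs', fun q hq => ?_⟩
  have hq₂ : q.2 ≠ b → H.dist s' b < H.dist s' q.2 := hsep q.2 (Set.mem_image_of_mem _ hq)
  by_cases hq₁ : q.1 = a
  · have : q.2 ≠ b := fun h => hab (h ▸ hq₁ ▸ hq)
    rw [hq₁]
    exact Nat.add_lt_add_left (hq₂ this) _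
  · refine Nat.add_lt_add_of_lt_of_le (hs q hq hq₁) ?_
    by_cases hqb : q.2 = b
    · exact hqb ▸ le_rfl
    · exact (hq₂ hqb).le

lemma exists_dSet_boxProd_lt {G : SimpleGraph V} {H : SimpleGraph W} (hG : G.Connected)
    (hH : H.Connected) {S' : Set W} {ℓ : ℕ} (hS' : LSolid H S' ℓ) (hS'ne : S'.Nonempty)
    {X Y : Set (V × W)} (hY : Y.Nonempty) (hYfin : Y.Finite) (hYc : Y.ncard ≤ ℓ)
    {p : V × W} (hpX : p ∈ X) (hpY : p ∉ Y) {s : V}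
    (hs : ∀ q ∈ Y, q.1 ≠ p.1 → G.dist s p.1 < G.dist s q.1) :
    ∃ s' ∈ S', dSet (G □ H) (s, s') X < dSet (G □ H) (s, s') Y := by
  obtain ⟨s', hs', hlt⟩ := hS'.exists_forall_add_dist_lt hS'ne hYfin hYc hpY hs
  refine ⟨s', hs', dSet_lt_dSet_of_forall_dist_lt hpX hY fun q hq => ?_⟩
  rw [dist_boxProd hG hH, dist_boxProd hG hH]
  exact hlt q hq

end ProductSeparation

theorem stmt_12 {W : Type*} [Fintype V] [Fintype W] [Nontrivial V] [Nontrivial W]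
    (G : SimpleGraph V) (H : SimpleGraph W) (hG : G.Connected) (hH : H.Connected)
    (ℓ : ℕ) (hℓ : 2 ≤ ℓ) (S : Set V) (S' : Set W)
    (hS : LResolving G S ℓ) (hS' : LSolid H S' ℓ) :
    LResolving (G.boxProd H) (S ×ˢ S') ℓ := by
  have hS'ne := hS'.nonempty (by omega)
  have separate : ∀ {X Y : Set (V × W)}, Y.Nonempty → Y.ncard ≤ ℓ → ∀ p ∈ X, p ∉ Y →
      ∀ s ∈ S, (∀ q ∈ Y, q.1 ≠ p.1 → G.dist s p.1 < G.dist s q.1) →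
      ∃ z ∈ S ×ˢ S', dSet (G □ H) z X ≠ dSet (G □ H) z Y := by
    intro X Y hY hYc p hpX hpY s hs hsep
    obtain ⟨s', hs', hlt⟩ := exists_dSet_boxProd_lt hG hH hS' hS'ne hY Y.toFinite hYc hpX hpY hsep
    exact ⟨(s, s'), ⟨hs, hs'⟩, hlt.ne⟩
  have hfstc : ∀ Z : Set (V × W), Z.ncard ≤ ℓ → (Prod.fst '' Z).ncard ≤ ℓ :=
    fun Z hZ => (Set.ncard_image_le Z.toFinite).trans hZ
  intro X Y hX hY hXc hYc hXY
  by_cases hfst : Prod.fst '' X = Prod.fst '' Y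
  · have hSne := hS.nonempty (by omega)
    obtain ⟨p, ⟨hpX, hpY⟩ | ⟨hpY, hpX⟩⟩ := Set.symmDiff_nonempty.2 hXY
    · obtain ⟨s, hs, hsep⟩ := hS.exists_forall_dist_lt hSne (hfstc Y hYc)
        (hfst ▸ Set.mem_image_of_mem _ hpX)
      exact separate hY hYc p hpX hpY s hs fun q hq => hsep q.1 (Set.mem_image_of_mem _ hq)
    · obtain ⟨s, hs, hsep⟩ := hS.exists_forall_dist_lt hSne (hfstc X hXc)
        (hfst ▸ Set.mem_image_of_mem _ hpY)
      obtain ⟨z, hz, hne⟩ :=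
        separate hX hXc p hpY hpX s hs fun q hq => hsep q.1 (Set.mem_image_of_mem _ hq)
      exact ⟨z, hz, hne.symm⟩
  obtain ⟨s, hs, hne⟩ := hS _ _ (hX.image _) (hY.image _) (hfstc X hXc) (hfstc Y hYc) hfst
  rcases hne.lt_or_gt with hlt | hlt
  · obtain ⟨_, ⟨p, hpX, rfl⟩, hp⟩ := exists_forall_dist_lt_of_dSet_lt (hX.image _) hlt
    exact separate hY hYc p hpX (fun hpY => (hp _ (Set.mem_image_of_mem _ hpY)).false) s hs
      fun q hq _ => hp _ (Set.mem_image_of_mem _ hq)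
  · obtain ⟨_, ⟨p, hpY, rfl⟩, hp⟩ := exists_forall_dist_lt_of_dSet_lt (hY.image _) hlt
    obtain ⟨z, hz, hne⟩ := separate hX hXc p hpY
      (fun hpX => (hp _ (Set.mem_image_of_mem _ hpX)).false) s hs
      fun q hq _ => hp _ (Set.mem_image_of_mem _ hq)
    exact ⟨z, hz, hne.symm⟩
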